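/- Let R be a commutative ring, ∂ the Demazure operator on R[x,y] with ∂(f) = (f - s(f))/(x - y), and let X denote the operator of multiplication by x and Y multiplication by y. Then as operators on R[x,y]: ∂ ∘ X - Y ∘ ∂ = id and X ∘ ∂ - ∂ ∘ Y = id. -/

import Mathlib

/-!
After multiplication by `x - y`, both identities follow from the defining relation of `∂` and
`s(x f) = y s(f)`. The factor `x - y` can then be cancelled: it is a non-zero-divisor, because the
injective substitution `x ↦ x + y` sends it to `x`.
-/

open MvPolynomial nonZeroDivisors

namespace MvPolynomial

variable {R σ : Type*} [CommRing R]

theorem aeval_update_X_add_X_injective [DecidableEq σ] {i j : σ} (hij : i ≠ j) :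
    Function.Injective (aeval (R := R) (Function.update (X (R := R)) i (X i + X j))) := by
  let unshear : MvPolynomial σ R →ₐ[R] MvPolynomial σ R := aeval (Function.update X i (X i - X j))
  refine Function.LeftInverse.injective (g := unshear) ?_
  suffices unshear.comp (aeval (Function.update X i (X i + X j))) = AlgHom.id R _ from
    AlgHom.congr_fun this
  ext k
  rcases eq_or_ne k i with rfl | hk
  · simp [unshear, hij.symm]
  · simp [unshear, hk]

theorem X_sub_X_mem_nonZeroDivisors {i j : σ} (hij : i ≠ j) :
    (X i - X j : MvPolynomial σ R) ∈ (MvPolynomial σ R)⁰ := by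
  classical
  refine mem_nonZeroDivisors_of_injective (aeval_update_X_add_X_injective hij) ?_
  simpa [hij.symm] using (isRegular_X (n := i)).mem_nonZeroDivisors

section Demazure

variable [DecidableEq σ] {i j : σ} (hij : i ≠ j) {D : MvPolynomial σ R → MvPolynomial σ R}
  (hD : ∀ f, D f * (X i - X j) = f - rename (Equiv.swap i j) f)
include hij hD

theorem demazure_X_mul_sub_X_mul_demazure (f : MvPolynomial σ R) :
    D (X i * f) - X j * D f = f := by
  refine (mul_cancel_right_mem_nonZeroDivisors (X_sub_X_mem_nonZeroDivisors hij)).mp ?_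
  have swap_X_mul : rename (Equiv.swap i j) (X i * f) = X j * rename (Equiv.swap i j) f := by
    simp
  linear_combination hD (X i * f) - X j * hD f - swap_X_mul

theorem X_mul_demazure_sub_demazure_X_mul (f : MvPolynomial σ R) :
    X i * D f - D (X j * f) = f := by
  -- `-D` is the Demazure operator for the pair `(j, i)`.
  have hD' : ∀ f, -D f * (X j - X i) = f - rename (Equiv.swap j i) f := fun f => by
    rw [Equiv.swap_comm, ← hD]; ring
  linear_combination demazure_X_mul_sub_X_mul_demazure hij.symm hD' f

end Demazure

end MvPolynomial

/-- The Demazure operator `∂` on `R[x,y]` (characterized by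
`∂(f) * (x - y) = f - s(f)`, `s` swapping `x` and `y`) satisfies
`∂ ∘ X - Y ∘ ∂ = id` and `X ∘ ∂ - ∂ ∘ Y = id`, where `X`, `Y` denote
multiplication by `x` and `y` respectively. -/
theorem demazure_dot_relations (R : Type*) [CommRing R]
    (D : MvPolynomial (Fin 2) R → MvPolynomial (Fin 2) R)
    (hD : ∀ f : MvPolynomial (Fin 2) R,
      D f * (X 0 - X 1) = f - rename (Equiv.swap (0 : Fin 2) 1) f) :
    (∀ f : MvPolynomial (Fin 2) R, D (X 0 * f) - X 1 * D f = f) ∧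
    (∀ f : MvPolynomial (Fin 2) R, X 0 * D f - D (X 1 * f) = f) :=
  ⟨demazure_X_mul_sub_X_mul_demazure zero_ne_one hD,
    X_mul_demazure_sub_demazure_X_mul zero_ne_one hD⟩
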